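/- arXiv:1604.04655 — 8 statements merged into one kernel-verified Lean document; each statement's English description precedes it below -/
import Mathlib

section
/- In an algebra satisfying (R1)-(R3) together with the first involution law r⁻⁻=r, the second involution law (r;s)⁻=s⁻;r⁻, and the distributive law for converse (r+s)⁻=r⁻+s⁻, the right-hand distributive law (r+s);t=r;t+s;t holds if and only if the left-hand distributive law r;(s+t)=r;s+r;t holds. -/
/-! Converse is an involutive anti-automorphism of `;` preserving `+`, so conjugating by it turns
`;` into the opposite multiplication and swaps the two distributive laws. -/

theorem mul_add_of_add_mul {A : Type*} (add mul : A → A → A) (conv : A → A)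
    (conv_involutive : Function.Involutive conv)
    (conv_mul : ∀ r s, conv (mul r s) = mul (conv s) (conv r))
    (conv_add : ∀ r s, conv (add r s) = add (conv r) (conv s))
    (add_mul : ∀ r s t, mul (add r s) t = add (mul r t) (mul s t)) :
    ∀ r s t, mul r (add s t) = add (mul r s) (mul r t) := by
  intro r s t
  apply conv_involutive.injective
  rw [conv_mul, conv_add, add_mul, conv_add, conv_mul, conv_mul]

theorem R8_iff_R8'_general {A : Type*} (add : A → A → A)
    (mul : A → A → A) (conv : A → A)
    (R6 : ∀ r, conv (conv r) = r)
    (R7 : ∀ r s, conv (mul r s) = mul (conv s) (conv r))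
    (R9 : ∀ r s, conv (add r s) = add (conv r) (conv s)) :
    (∀ r s t, mul (add r s) t = add (mul r t) (mul s t)) ↔
      (∀ r s t, mul r (add s t) = add (mul r s) (mul r t)) :=
  ⟨mul_add_of_add_mul add mul conv R6 R7 R9,
    fun h r s t =>
      mul_add_of_add_mul add (fun r s => mul s r) conv R6 (fun r s => R7 s r) R9
        (fun r s t => h t r s) t r s⟩

/-- Under (R1)-(R3), (R6), (R7), and (R9), the right-hand distributive law (R8)
holds iff the left-hand distributive law (R8') holds. -/
theorem R8_iff_R8' {A : Type*} (add : A → A → A) (compl : A → A)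
    (mul : A → A → A) (conv : A → A) (e : A)
    (R1 : ∀ r s, add r s = add s r)
    (R2 : ∀ r s t, add r (add s t) = add (add r s) t)
    (R3 : ∀ r s, add (compl (add (compl r) s)) (compl (add (compl r) (compl s))) = r)
    (R6 : ∀ r, conv (conv r) = r)
    (R7 : ∀ r s, conv (mul r s) = mul (conv s) (conv r))
    (R9 : ∀ r s, conv (add r s) = add (conv r) (conv s)) :
    (∀ r s t, mul (add r s) t = add (mul r t) (mul s t)) ↔
      (∀ r s t, mul r (add s t) = add (mul r s) (mul r t)) :=
  R8_iff_R8'_general add mul conv R6 R7 R9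
end

section
/- In an algebra satisfying (R1)-(R3), the associative law r;(s;t)=(r;s);t, the identity law r;1'=r, and the cycle law ((r;s)·t = 0 iff (r⁻;t)·s = 0), the second involution law (r;s)⁻ = s⁻;r⁻ holds. -/
/-!
Two elements of the Boolean reduct are equal as soon as they are disjoint from the same
elements, so it suffices to show that `(r ; s)˘` and `s˘ ; r˘` are disjoint from the same `t`.
With `r = r ; 1'`, the cycle law rotates `(r ; s)˘ · t = 0` through
`((r ; s) ; t) · 1' = 0 = (r ; (s ; t)) · 1'` (associativity, after `r˘˘ = r`, which is proved
the same way) to `(s ; t) · r˘ = 0` and finally to `(s˘ ; r˘) · t = 0`.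

For the Boolean part, Huntington's axiom `(x′ + y)′ + (x′ + y′)′ = x` alone gives that
`x + x′` does not depend on `x`, which makes `(1' + 1'′)′` a zero for every `x · x′`.
-/

section RelationAlgebra

variable {A : Type*} {add : A → A → A} {compl : A → A} {mul : A → A → A} {conv : A → A}

local infixl:65 " ∔ " => add
local postfix:max "′" => compl
local infixl:70 " ⨾ " => mul
local postfix:max "˘" => conv

theorem add_compl_eq_add_compl [Std.Commutative add] [Std.Associative add]
    (huntington : ∀ x y, (x′ ∔ y)′ ∔ (x′ ∔ y′)′ = x) (x y : A) : x ∔ x′ = y ∔ y′ := by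
  -- `y ∔ y′` expands to an expression symmetric in `x` and `y`
  have expand : ∀ x y : A,
      y ∔ y′ = (x′ ∔ y′)′ ∔ (x′ ∔ y)′ ∔ (y′ ∔ x)′ ∔ (x′′ ∔ y′′)′ := fun x y =>
    calc y ∔ y′ = (y′ ∔ x)′ ∔ (y′ ∔ x′)′ ∔ ((y′′ ∔ x′)′ ∔ (y′′ ∔ x′′)′) := by
          rw [huntington y x, huntington y′ x′]
      _ = (y′ ∔ x)′ ∔ ((x′ ∔ y′)′ ∔ (x′ ∔ y′′)′) ∔ (x′′ ∔ y′′)′ := by ac_rfl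
      _ = (y′ ∔ x)′ ∔ ((x′ ∔ y)′ ∔ (x′ ∔ y′)′) ∔ (x′′ ∔ y′′)′ := by
          rw [huntington x y′, huntington x y]
      _ = (x′ ∔ y′)′ ∔ (x′ ∔ y)′ ∔ (y′ ∔ x)′ ∔ (x′′ ∔ y′′)′ := by ac_rfl
  rw [expand y x, expand x y]
  ac_rfl

theorem eq_of_meet_compl_eq [Std.Commutative add]
    (huntington : ∀ x y, (x′ ∔ y)′ ∔ (x′ ∔ y′)′ = x) {x y z : A}
    (hxy : (x′ ∔ y′′)′ = z) (hyx : (y′ ∔ x′′)′ = z) : x = y :=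
  calc x = (x′ ∔ y′)′ ∔ (x′ ∔ y′′)′ := (huntington x y′).symm
    _ = (y′ ∔ x′)′ ∔ (y′ ∔ x′′)′ := by rw [hxy, hyx, Std.Commutative.comm (op := add) x′ y′]
    _ = y := huntington y x′

theorem eq_of_forall_meet_eq_zero_iff [Std.Commutative add] [Std.Associative add]
    (huntington : ∀ x y, (x′ ∔ y)′ ∔ (x′ ∔ y′)′ = x) (e : A) {x y : A}
    (h : ∀ t, (x′ ∔ t′)′ = (e ∔ e′)′ ↔ (y′ ∔ t′)′ = (e ∔ e′)′) : x = y := by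
  have meet_compl_self : ∀ a : A, (a′ ∔ a′′)′ = (e ∔ e′)′ := fun a =>
    congrArg compl (add_compl_eq_add_compl huntington a′ e)
  exact eq_of_meet_compl_eq huntington
    ((h y′).2 (meet_compl_self y)) ((h x′).1 (meet_compl_self x))

theorem meet_eq_zero_iff_conv_mul_meet_id_eq_zero {e : A} (mul_id : ∀ r, r ⨾ e = r)
    (cycle : ∀ r s t, ((r ⨾ s)′ ∔ t′)′ = (e ∔ e′)′ ↔ ((r˘ ⨾ t)′ ∔ s′)′ = (e ∔ e′)′) (p t : A) :
    (p′ ∔ t′)′ = (e ∔ e′)′ ↔ ((p˘ ⨾ t)′ ∔ e′)′ = (e ∔ e′)′ := by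
  simpa only [mul_id] using cycle p e t

theorem conv_conv [Std.Commutative add] [Std.Associative add]
    (huntington : ∀ x y, (x′ ∔ y)′ ∔ (x′ ∔ y′)′ = x) {e : A} (mul_id : ∀ r, r ⨾ e = r)
    (cycle : ∀ r s t, ((r ⨾ s)′ ∔ t′)′ = (e ∔ e′)′ ↔ ((r˘ ⨾ t)′ ∔ s′)′ = (e ∔ e′)′) (p : A) :
    p˘˘ = p :=
  eq_of_forall_meet_eq_zero_iff huntington e fun t => by
    simpa only [mul_id] using (cycle p˘ t e).symm.trans
      (meet_eq_zero_iff_conv_mul_meet_id_eq_zero mul_id cycle p t).symm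

theorem conv_mul [Std.Commutative add] [Std.Associative add]
    (huntington : ∀ x y, (x′ ∔ y)′ ∔ (x′ ∔ y′)′ = x) (mul_assoc : ∀ r s t, r ⨾ (s ⨾ t) = r ⨾ s ⨾ t)
    {e : A} (mul_id : ∀ r, r ⨾ e = r)
    (cycle : ∀ r s t, ((r ⨾ s)′ ∔ t′)′ = (e ∔ e′)′ ↔ ((r˘ ⨾ t)′ ∔ s′)′ = (e ∔ e′)′) (r s : A) :
    (r ⨾ s)˘ = s˘ ⨾ r˘ := by
  refine eq_of_forall_meet_eq_zero_iff huntington e fun t => ?_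
  calc ((r ⨾ s)˘′ ∔ t′)′ = (e ∔ e′)′ ↔ ((r ⨾ (s ⨾ t))′ ∔ e′)′ = (e ∔ e′)′ := by
        rw [meet_eq_zero_iff_conv_mul_meet_id_eq_zero mul_id cycle,
          conv_conv huntington mul_id cycle, mul_assoc]
    _ ↔ ((s ⨾ t)′ ∔ r˘′)′ = (e ∔ e′)′ := by
        rw [cycle, mul_id, Std.Commutative.comm (op := add) r˘′]
    _ ↔ ((s˘ ⨾ r˘)′ ∔ t′)′ = (e ∔ e′)′ := cycle s t r˘

end RelationAlgebra

/-- Under (R1)-(R3), the associative law (R4) and identity law (R5),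
together with the cycle law (R11'), imply the second involution law (R7). -/
theorem R7_of_cycle_law {A : Type*} (add : A → A → A) (compl : A → A)
    (mul : A → A → A) (conv : A → A) (e : A)
    (R1 : ∀ r s, add r s = add s r)
    (R2 : ∀ r s t, add r (add s t) = add (add r s) t)
    (R3 : ∀ r s, add (compl (add (compl r) s)) (compl (add (compl r) (compl s))) = r)
    (R4 : ∀ r s t, mul r (mul s t) = mul (mul r s) t)
    (R5 : ∀ r, mul r e = r)
    (R11' : ∀ r s t,
      compl (add (compl (mul r s)) (compl t)) = compl (add e (compl e)) ↔
      compl (add (compl (mul (conv r) t)) (compl s)) = compl (add e (compl e))) :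
    ∀ r s, conv (mul r s) = mul (conv s) (conv r) :=
  have : Std.Commutative add := ⟨R1⟩
  have : Std.Associative add := ⟨fun r s t => (R2 r s t).symm⟩
  conv_mul R3 R4 R5 R11'
end

section
/- Tarski's axiom system (R1)-(R10) for relation algebras is equivalent to the system S consisting of (R1)-(R6), both distributive laws (R8) and (R8'), and (R10); in particular, the second involution law (R7) and the distributive law for converse (R9) are derivable from (R1)-(R6), (R8), (R8'), and (R10). -/
/-!
Huntington's axiom (R3), together with commutativity and associativity of `+`, already makes
`(A, +, ᶜ)` Boolean: first `x + xᶜ` turns out to be a constant `1`, then `x + 1ᶜ = x`, from which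
`xᶜᶜ = x`, `x + x = x` and antitonicity of `ᶜ` follow. With `+` read as a join, (R10) and the
monotonicity of `r ; -` coming from (R8') give Schröder's law `a ; b ≤ cᶜ ↔ a⁻ ; c ≤ bᶜ`, and
(R7), (R9) follow by comparing both sides against all complements `xᶜ`. Conversely (R8') is the
image of (R8) under the anti-automorphism `⁻`.
-/

section

variable {A : Type*}

def HuntingtonAxiom (A : Type*) [Add A] [Compl A] : Prop :=
  ∀ x y : A, (xᶜ + y)ᶜ + (xᶜ + yᶜ)ᶜ = x

namespace HuntingtonAxiom

variable [AddCommSemigroup A] [Compl A]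

theorem add_compl_exchange (h : HuntingtonAxiom A) (x y : A) :
    x + (xᶜᶜ + yᶜ)ᶜ = y + (xᶜ + y)ᶜ :=
  calc x + (xᶜᶜ + yᶜ)ᶜ = (xᶜ + y)ᶜ + ((xᶜ + yᶜ)ᶜ + (xᶜᶜ + yᶜ)ᶜ) := by rw [← add_assoc, h]
    _ = y + (xᶜ + y)ᶜ := by rw [add_comm xᶜ yᶜ, add_comm xᶜᶜ yᶜ, h, add_comm]

theorem add_compl_eq_add_compl (h : HuntingtonAxiom A) (x y : A) : x + xᶜ = y + yᶜ :=
  calc x + xᶜ = xᶜ + ((xᶜ + yᶜ)ᶜ + (xᶜ + yᶜᶜ)ᶜ) := by rw [h, add_comm]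
    _ = y + (yᶜᶜ + xᶜᶜ)ᶜ + (xᶜ + yᶜᶜ)ᶜ := by
      rw [h.add_compl_exchange y xᶜ, add_comm yᶜ xᶜ, add_assoc]
    _ = y + ((yᶜᶜ + xᶜ)ᶜ + (yᶜᶜ + xᶜᶜ)ᶜ) := by ac_rfl
    _ = y + yᶜ := by rw [h]

theorem add_compl_add (h : HuntingtonAxiom A) (x y : A) : x + xᶜ + y = x + xᶜ :=
  calc x + xᶜ + y = (yᶜᶜ + y)ᶜ + (yᶜᶜ + yᶜ)ᶜ + yᶜᶜ + y := by
        rw [h.add_compl_eq_add_compl x yᶜ, h yᶜ y]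
    _ = (yᶜᶜ + y) + (yᶜᶜ + y)ᶜ + (yᶜ + yᶜᶜ)ᶜ := by ac_rfl
    _ = x + xᶜ := by
      rw [h.add_compl_eq_add_compl (yᶜᶜ + y) x, h.add_compl_eq_add_compl yᶜ x,
        h.add_compl_eq_add_compl _ x]

theorem compl_add_compl_add_compl (h : HuntingtonAxiom A) (x y : A) :
    (y + yᶜ)ᶜ + (xᶜ + (y + yᶜ)ᶜ)ᶜ = x := by
  simpa only [add_comm xᶜ (y + yᶜ), h.add_compl_add] using h x (y + yᶜ)

theorem add_compl_add_compl (h : HuntingtonAxiom A) (x y : A) : x + (y + yᶜ)ᶜ = x := by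
  have bot_add_bot : (y + yᶜ)ᶜ + (y + yᶜ)ᶜ = (y + yᶜ)ᶜ := by
    have := h.compl_add_compl_add_compl (y + yᶜ)ᶜ y
    rwa [add_comm (y + yᶜ)ᶜᶜ, h.add_compl_eq_add_compl (y + yᶜ)ᶜ y] at this
  calc x + (y + yᶜ)ᶜ = (y + yᶜ)ᶜ + (y + yᶜ)ᶜ + (xᶜ + (y + yᶜ)ᶜ)ᶜ := by
        nth_rw 1 [← h.compl_add_compl_add_compl x y]; ac_rfl
    _ = x := by rw [bot_add_bot, h.compl_add_compl_add_compl]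

theorem compl_compl (h : HuntingtonAxiom A) (x : A) : xᶜᶜ = x := by
  have := h.add_compl_exchange x xᶜᶜ
  rwa [h.add_compl_eq_add_compl xᶜᶜ x, h.add_compl_eq_add_compl xᶜ x, h.add_compl_add_compl,
    h.add_compl_add_compl, eq_comm] at this

theorem add_self (h : HuntingtonAxiom A) (x : A) : x + x = x := by
  have compl_add_self : (xᶜᶜ + xᶜᶜ)ᶜ = xᶜ := by
    simpa only [h.add_compl_add_compl] using h xᶜ xᶜᶜ
  simpa only [h.compl_compl] using congrArg compl compl_add_self

theorem compl_add_compl_of_add_eq (h : HuntingtonAxiom A) ⦃a b : A⦄ (hab : a + b = b) :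
    bᶜ + aᶜ = aᶜ := by
  have compl_eq : (a + b)ᶜ + (a + bᶜ)ᶜ = aᶜ := by simpa only [h.compl_compl] using h aᶜ b
  rw [← hab, ← compl_eq, ← add_assoc, h.add_self]

/-- The join-semilattice with `a ≤ b ↔ a + b = b`. -/
abbrev toSemilatticeSup (h : HuntingtonAxiom A) : SemilatticeSup A :=
  letI : Max A := ⟨(· + ·)⟩
  SemilatticeSup.mk' add_comm add_assoc h.add_self

end HuntingtonAxiom

theorem le_compl_comm_of_involutive_of_antitone [Preorder A] [Compl A]
    (hinv : Function.Involutive (compl : A → A)) (hanti : Antitone (compl : A → A)) {a b : A} :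
    a ≤ bᶜ ↔ b ≤ aᶜ :=
  ⟨fun hab => hinv b ▸ hanti hab, fun hba => hinv a ▸ hanti hba⟩

theorem eq_of_forall_le_compl_iff [PartialOrder A] [Compl A]
    (hinv : Function.Involutive (compl : A → A)) {a b : A} (h : ∀ x, a ≤ xᶜ ↔ b ≤ xᶜ) : a = b :=
  eq_of_forall_ge_iff fun x => by simpa only [hinv x] using h xᶜ

theorem mul_add_of_conv [Add A] [Mul A] {conv : A → A} (conv_conv : ∀ r : A, conv (conv r) = r)
    (conv_mul : ∀ r s : A, conv (r * s) = conv s * conv r)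
    (conv_add : ∀ r s : A, conv (r + s) = conv r + conv s)
    (add_mul : ∀ r s t : A, (r + s) * t = r * t + s * t) (r s t : A) :
    r * (s + t) = r * s + r * t :=
  calc r * (s + t) = conv ((conv s + conv t) * conv r) := by
        simp only [conv_mul, conv_add, conv_conv]
    _ = r * s + r * t := by simp only [add_mul, conv_add, conv_mul, conv_conv]

/-- System S over a join-semilattice, with (R3) replaced by its consequence that `ᶜ` is an
antitone involution, and (R10) written as `r⁻ ; (r ; s)ᶜ ≤ sᶜ`. -/
structure SystemS (A : Type*) [SemilatticeSup A] [Compl A] [Mul A] (conv : A → A) (e : A) :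
    Prop where
  compl_involutive : Function.Involutive (compl : A → A)
  compl_antitone : Antitone (compl : A → A)
  mul_assoc : ∀ r s t : A, r * (s * t) = r * s * t
  mul_e : ∀ r : A, r * e = r
  conv_involutive : Function.Involutive conv
  sup_mul : ∀ r s t : A, (r ⊔ s) * t = r * t ⊔ s * t
  mul_sup : ∀ r s t : A, r * (s ⊔ t) = r * s ⊔ r * t
  conv_mul_compl_mul_le : ∀ r s : A, conv r * (r * s)ᶜ ≤ sᶜ

namespace SystemS

variable [SemilatticeSup A] [Compl A] [Mul A] {conv : A → A} {e : A}

theorem le_compl_comm (S : SystemS A conv e) {a b : A} : a ≤ bᶜ ↔ b ≤ aᶜ :=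
  le_compl_comm_of_involutive_of_antitone S.compl_involutive S.compl_antitone

theorem mul_le_mul_left (S : SystemS A conv e) (a : A) {b c : A} (hbc : b ≤ c) : a * b ≤ a * c :=
  calc a * b ≤ a * b ⊔ a * c := le_sup_left
    _ = a * c := by rw [← S.mul_sup, sup_eq_right.2 hbc]

theorem conv_mul_le_compl_of_mul_le_compl (S : SystemS A conv e) {a b c : A}
    (h : a * b ≤ cᶜ) : conv a * c ≤ bᶜ :=
  (S.mul_le_mul_left _ (S.le_compl_comm.1 h)).trans (S.conv_mul_compl_mul_le a b)

theorem mul_le_compl_iff (S : SystemS A conv e) {a b c : A} : a * b ≤ cᶜ ↔ conv a * c ≤ bᶜ :=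
  ⟨S.conv_mul_le_compl_of_mul_le_compl, fun h => by
    simpa only [S.conv_involutive a] using S.conv_mul_le_compl_of_mul_le_compl h⟩

theorem conv_le_compl_iff (S : SystemS A conv e) {x c : A} : conv x ≤ cᶜ ↔ x * c ≤ eᶜ := by
  simpa only [S.mul_e, S.conv_involutive x] using S.mul_le_compl_iff (a := conv x) (b := e)

theorem conv_mul (S : SystemS A conv e) (r s : A) : conv (r * s) = conv s * conv r :=
  eq_of_forall_le_compl_iff S.compl_involutive fun x => by
    rw [S.conv_le_compl_iff, ← S.mul_assoc, ← S.conv_le_compl_iff, S.le_compl_comm,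
      S.mul_le_compl_iff]

theorem conv_sup (S : SystemS A conv e) (r s : A) : conv (r ⊔ s) = conv r ⊔ conv s :=
  eq_of_forall_le_compl_iff S.compl_involutive fun x => by
    rw [S.conv_le_compl_iff, S.sup_mul, sup_le_iff, sup_le_iff, S.conv_le_compl_iff,
      S.conv_le_compl_iff]

end SystemS

end

/-- Tarski's axiom system (R1)-(R10) is equivalent to the system S consisting of
(R1)-(R6), both distributive laws (R8) and (R8'), and (R10); in particular (R7)
and (R9) are derivable from (R1)-(R6), (R8), (R8'), (R10). -/
theorem tarski_iff_systemS {A : Type*} (add : A → A → A) (compl : A → A)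
    (mul : A → A → A) (conv : A → A) (e : A) :
    ((∀ r s : A, add r s = add s r) ∧
     (∀ r s t : A, add r (add s t) = add (add r s) t) ∧
     (∀ r s : A, add (compl (add (compl r) s)) (compl (add (compl r) (compl s))) = r) ∧
     (∀ r s t : A, mul r (mul s t) = mul (mul r s) t) ∧
     (∀ r : A, mul r e = r) ∧
     (∀ r : A, conv (conv r) = r) ∧
     (∀ r s : A, conv (mul r s) = mul (conv s) (conv r)) ∧
     (∀ r s t : A, mul (add r s) t = add (mul r t) (mul s t)) ∧
     (∀ r s : A, conv (add r s) = add (conv r) (conv s)) ∧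
     (∀ r s : A, add (mul (conv r) (compl (mul r s))) (compl s) = compl s)) ↔
    ((∀ r s : A, add r s = add s r) ∧
     (∀ r s t : A, add r (add s t) = add (add r s) t) ∧
     (∀ r s : A, add (compl (add (compl r) s)) (compl (add (compl r) (compl s))) = r) ∧
     (∀ r s t : A, mul r (mul s t) = mul (mul r s) t) ∧
     (∀ r : A, mul r e = r) ∧
     (∀ r : A, conv (conv r) = r) ∧
     (∀ r s t : A, mul (add r s) t = add (mul r t) (mul s t)) ∧
     (∀ r s t : A, mul r (add s t) = add (mul r s) (mul r t)) ∧
     (∀ r s : A, add (mul (conv r) (compl (mul r s))) (compl s) = compl s)) := by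
  let _ : Mul A := ⟨mul⟩
  constructor
  · rintro ⟨hC, hA, hH, hM, hI, hCC, hR7, hR8, hR9, hR10⟩
    let _ : Add A := ⟨add⟩
    exact ⟨hC, hA, hH, hM, hI, hCC, hR8, mul_add_of_conv hCC hR7 hR9 hR8, hR10⟩
  · rintro ⟨hC, hA, hH, hM, hI, hCC, hR8, hR8', hR10⟩
    let _ : AddCommSemigroup A :=
      { add, add_comm := hC, add_assoc := fun r s t => (hA r s t).symm }
    let _ : Compl A := ⟨compl⟩
    have hu : HuntingtonAxiom A := hH
    let _ : SemilatticeSup A := hu.toSemilatticeSup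
    have S : SystemS A conv e :=
      ⟨hu.compl_compl, hu.compl_add_compl_of_add_eq, hM, hI, hCC, hR8, hR8', hR10⟩
    exact ⟨hC, hA, hH, hM, hI, hCC, S.conv_mul, hR8, S.conv_sup, hR10⟩
end

section
/- Axiom (R3) (Huntington's law) is independent of the remaining Tarski axioms: on the two-element Boolean algebra {0,1} with its usual join +, define complement as the identity function (-r=r), relative multiplication as Boolean meet (r;s=r∧s), converse as the identity, and 1'=1. Then (R1), (R2), (R4)-(R10) all hold but (R3) fails. -/
/-!
Once complement and converse are the identity, every axiom except (R3) is a law of the lattice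
`({0,1}, ∨, ∧)`: (R7) is commutativity of `∧`, (R8) distributivity and (R10) absorption.
Huntington's term, on the other hand, collapses to `(r ∨ s) ∨ (r ∨ s) = r ∨ s`, which is `1 ≠ 0`
at `r = 0`, `s = 1`.
-/

/-- Addition in the independence model for (R3): Boolean join on {0,1}. -/
def add9 (r s : Bool) : Bool := r || s

/-- Complement in the independence model for (R3): the identity function. -/
def compl9 (r : Bool) : Bool := r

/-- Relative multiplication in the independence model for (R3): Boolean meet. -/
def mul9 (r s : Bool) : Bool := r && s

/-- Converse in the independence model for (R3): the identity function. -/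
def conv9 (r : Bool) : Bool := r

/-- The identity constant 1' = 1. -/
def e9 : Bool := true

theorem add9_mul9_conv9_compl9 (r s : Bool) :
    add9 (mul9 (conv9 r) (compl9 (mul9 r s))) (compl9 s) = compl9 s :=
  sup_eq_right.2 (inf_le_right.trans inf_le_right)

theorem huntington_term_eq_add9 (r s : Bool) :
    add9 (compl9 (add9 (compl9 r) s)) (compl9 (add9 (compl9 r) (compl9 s))) = add9 r s :=
  Bool.or_self _

/-- Axiom (R3) (Huntington's law) is independent of the remaining Tarski axioms:
on the two-element Boolean algebra with complement redefined as the identity,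
relative multiplication the meet, converse the identity, and 1'=1, axioms
(R1), (R2), (R4)-(R10) all hold but (R3) fails. -/
theorem R3_independent :
    (∀ r s, add9 r s = add9 s r) ∧
    (∀ r s t, add9 r (add9 s t) = add9 (add9 r s) t) ∧
    (∀ r s t, mul9 r (mul9 s t) = mul9 (mul9 r s) t) ∧
    (∀ r, mul9 r e9 = r) ∧
    (∀ r, conv9 (conv9 r) = r) ∧
    (∀ r s, conv9 (mul9 r s) = mul9 (conv9 s) (conv9 r)) ∧
    (∀ r s t, mul9 (add9 r s) t = add9 (mul9 r t) (mul9 s t)) ∧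
    (∀ r s, conv9 (add9 r s) = add9 (conv9 r) (conv9 s)) ∧
    (∀ r s, add9 (mul9 (conv9 r) (compl9 (mul9 r s))) (compl9 s) = compl9 s) ∧
    ¬ (∀ r s, add9 (compl9 (add9 (compl9 r) s))
        (compl9 (add9 (compl9 r) (compl9 s))) = r) := by
  refine ⟨Bool.or_comm, fun r s t => (Bool.or_assoc r s t).symm,
    fun r s t => (Bool.and_assoc r s t).symm, Bool.and_true, fun _ => rfl, Bool.and_comm,
    Bool.and_or_distrib_right, fun _ _ => rfl, add9_mul9_conv9_compl9, fun huntington => ?_⟩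
  have : add9 false true = false := huntington_term_eq_add9 false true ▸ huntington false true
  exact Bool.noConfusion this
end

section
/- Axiom (R4) (associativity of relative multiplication) is independent of the remaining Tarski axioms: in McKinsey's 8-element complex algebra over the partial algebra on {0,1,2} with 0 the identity, 1∘1=0, 2∘2=0, and 1∘2, 2∘1 undefined (so that X;Y = {x∘y : x∈X, y∈Y, x∘y defined}, converse is the identity, and the identity element is {0}), axioms (R1)-(R3) and (R5)-(R10) all hold but (R4) fails, since {1};({2};{2}) = {1} while ({1};{2});{2} = ∅. -/
/-!
Apart from the Boolean axioms, each of (R5), (R7), (R8), (R10) reduces to a pointwise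
property of `∘`: 0 is a right identity, `∘` is commutative (converse being the identity),
`;` is defined elementwise, and the cycle law `x ∘ y = z → x ∘ z = y` holds. Associativity
fails because `1 ∘ (2 ∘ 2) = 1 ∘ 0 = 1`, whereas `1 ∘ 2` is undefined.
-/

/-- The partial binary operation of McKinsey's three-element partial algebra on
{0,1,2}: 0 is a two-sided identity, 1∘1 = 0, 2∘2 = 0, and 1∘2, 2∘1 are
undefined. -/
def pmul (x y : Fin 3) : Option (Fin 3) :=
  if x = 0 then some y else if y = 0 then some x else if x = y then some 0 else none

/-- Relative multiplication in McKinsey's complex algebra: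
X;Y = {x∘y : x ∈ X, y ∈ Y, x∘y defined}. -/
def cm (X Y : Set (Fin 3)) : Set (Fin 3) :=
  {z | ∃ x ∈ X, ∃ y ∈ Y, pmul x y = some z}

theorem huntington {α : Type*} [BooleanAlgebra α] (x y : α) : (xᶜ ⊔ y)ᶜ ⊔ (xᶜ ⊔ yᶜ)ᶜ = x := by
  rw [compl_sup, compl_sup, compl_compl, compl_compl, sup_comm, sup_inf_inf_compl]

theorem pmul_comm (x y : Fin 3) : pmul x y = pmul y x := by
  revert x y; decide

theorem pmul_zero_right (x : Fin 3) : pmul x 0 = some x := by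
  revert x; decide

theorem pmul_eq_some_swap {x y z : Fin 3} (h : pmul x y = some z) : pmul x z = some y := by
  revert x y z; decide

theorem cm_comm (X Y : Set (Fin 3)) : cm X Y = cm Y X := by
  ext z
  constructor <;> rintro ⟨x, hx, y, hy, h⟩ <;> exact ⟨y, hy, x, hx, (pmul_comm y x).trans h⟩

theorem cm_zero_right (X : Set (Fin 3)) : cm X {0} = X := by
  ext z
  simp [cm, pmul_zero_right]

theorem cm_union_left (X Y Z : Set (Fin 3)) : cm (X ∪ Y) Z = cm X Z ∪ cm Y Z := by
  ext z
  simp only [cm, Set.mem_union, Set.mem_ofPred_eq, or_and_right, exists_or]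

theorem cm_cm_compl_subset (X Y : Set (Fin 3)) : cm X (cm X Y)ᶜ ⊆ Yᶜ := by
  rintro z ⟨x, hx, w, hw, h⟩ hz
  exact hw ⟨x, hx, z, hz, pmul_eq_some_swap h⟩

theorem cm_singleton (x y : Fin 3) : cm {x} {y} = {z | pmul x y = some z} := by
  ext z; simp [cm]

theorem cm_empty_left (Z : Set (Fin 3)) : cm ∅ Z = ∅ := by
  ext z; simp [cm]

theorem cm_two_two : cm {2} {2} = ({0} : Set (Fin 3)) := by
  rw [cm_singleton]; ext z; revert z; decide

theorem cm_one_two : cm {1} {2} = (∅ : Set (Fin 3)) := by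
  rw [cm_singleton]; ext z; revert z; decide

theorem cm_one_cm_two_two : cm {1} (cm {2} {2}) = ({1} : Set (Fin 3)) := by
  rw [cm_two_two, cm_zero_right]

theorem cm_cm_one_two_two : cm (cm {1} {2}) {2} = (∅ : Set (Fin 3)) := by
  rw [cm_one_two, cm_empty_left]

/-- Axiom (R4) (associativity of ;) is independent of the remaining Tarski
axioms: in McKinsey's 8-element complex algebra (union as +, set complement
as -, cm as ;, identity as converse, {0} as 1'), axioms (R1)-(R3) and
(R5)-(R10) all hold but (R4) fails, since {1};({2};{2}) = {1} while
({1};{2});{2} = ∅. -/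
theorem R4_independent :
    (∀ X Y : Set (Fin 3), X ∪ Y = Y ∪ X) ∧
    (∀ X Y Z : Set (Fin 3), X ∪ (Y ∪ Z) = (X ∪ Y) ∪ Z) ∧
    (∀ X Y : Set (Fin 3), (Xᶜ ∪ Y)ᶜ ∪ (Xᶜ ∪ Yᶜ)ᶜ = X) ∧
    (∀ X : Set (Fin 3), cm X {0} = X) ∧
    (∀ X : Set (Fin 3), id (id X) = X) ∧
    (∀ X Y : Set (Fin 3), id (cm X Y) = cm (id Y) (id X)) ∧
    (∀ X Y Z : Set (Fin 3), cm (X ∪ Y) Z = cm X Z ∪ cm Y Z) ∧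
    (∀ X Y : Set (Fin 3), id (X ∪ Y) = id X ∪ id Y) ∧
    (∀ X Y : Set (Fin 3), cm (id X) (cm X Y)ᶜ ∪ Yᶜ = Yᶜ) ∧
    ¬ (∀ X Y Z : Set (Fin 3), cm X (cm Y Z) = cm (cm X Y) Z) ∧
    cm {1} (cm {2} {2}) = {1} ∧
    cm (cm {1} {2}) {2} = (∅ : Set (Fin 3)) := by
  have not_assoc : ¬ ∀ X Y Z : Set (Fin 3), cm X (cm Y Z) = cm (cm X Y) Z := fun h => by
    simpa [cm_one_cm_two_two, cm_cm_one_two_two] using h {1} {2} {2}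
  exact ⟨Set.union_comm, fun X Y Z => (Set.union_assoc X Y Z).symm, huntington, cm_zero_right,
    fun _ => rfl, cm_comm, cm_union_left, fun _ _ => rfl,
    fun X Y => Set.union_eq_self_of_subset_left (cm_cm_compl_subset X Y), not_assoc,
    cm_one_cm_two_two, cm_cm_one_two_two⟩
end

section
/- Axiom (R5) (the right-hand identity law) is independent of the remaining Tarski axioms: on any Boolean algebra with at least two elements, define r;s=0 for all r,s, converse as the identity function, and 1' arbitrary. Then (R1)-(R4) and (R6)-(R10) hold but (R5) fails. -/
theorem huntington_identity {α : Type*} [BooleanAlgebra α] (r s : α) :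
    (rᶜ ⊔ s)ᶜ ⊔ (rᶜ ⊔ sᶜ)ᶜ = r := by
  rw [compl_sup, compl_sup, compl_compl, compl_compl, ← inf_sup_left, compl_sup_eq_top,
    inf_top_eq]

/-- Axiom (R5) (the right-hand identity law) is independent of the remaining
Tarski axioms: on any Boolean algebra with at least two elements, with
r;s = 0 for all r,s, converse the identity, and 1' arbitrary, axioms
(R1)-(R4) and (R6)-(R10) hold but (R5) fails. -/
theorem R5_independent {A : Type*} [BooleanAlgebra A]
    (h2 : ∃ x y : A, x ≠ y) (e : A) :
    (∀ r s : A, r ⊔ s = s ⊔ r) ∧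
    (∀ r s t : A, r ⊔ (s ⊔ t) = (r ⊔ s) ⊔ t) ∧
    (∀ r s : A, (rᶜ ⊔ s)ᶜ ⊔ (rᶜ ⊔ sᶜ)ᶜ = r) ∧
    (∀ r s t : A, (fun _ _ => (⊥ : A)) r ((fun _ _ => (⊥ : A)) s t) =
      (fun _ _ => (⊥ : A)) ((fun _ _ => (⊥ : A)) r s) t) ∧
    (∀ r : A, id (id r) = r) ∧
    (∀ r s : A, id ((fun _ _ => (⊥ : A)) r s) = (fun _ _ => (⊥ : A)) (id s) (id r)) ∧
    (∀ r s t : A, (fun _ _ => (⊥ : A)) (r ⊔ s) t =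
      (fun _ _ => (⊥ : A)) r t ⊔ (fun _ _ => (⊥ : A)) s t) ∧
    (∀ r s : A, id (r ⊔ s) = id r ⊔ id s) ∧
    (∀ r s : A, (fun _ _ => (⊥ : A)) (id r) ((fun _ _ => (⊥ : A)) r s)ᶜ ⊔ sᶜ = sᶜ) ∧
    ¬ (∀ r : A, (fun _ _ => (⊥ : A)) r e = r) := by
  refine ⟨sup_comm, fun r s t => (sup_assoc r s t).symm, huntington_identity,
    fun _ _ _ => rfl, fun _ => rfl, fun _ _ => rfl, fun _ _ _ => (bot_sup_eq ⊥).symm,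
    fun _ _ => rfl, fun _ _ => bot_sup_eq _, fun hR5 => ?_⟩
  obtain ⟨x, y, hxy⟩ := h2
  exact hxy ((hR5 x).symm.trans (hR5 y))
end

section
/- Axiom (R8) (the right-hand distributive law) is independent of the remaining Tarski axioms: let A be any symmetric integral relation algebra (converse is the identity, and r;s=0 implies r=0 or s=0) with at least two elements, and modify relative multiplication only by setting 0;0=1. In the modified algebra, (R1)-(R7), (R9), (R10) hold but (R8) fails, since (0+1');0 = 0 while 0;0 + 1';0 = 1. -/
/-!
In a symmetric integral relation algebra `r ; 0 = 0` for every `r`, `r ; 1 = 1` for `r ≠ 0`, and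
nonzero elements have nonzero products. Associativity of the modified product then follows by
splitting on which factors are `0`, and (R10) only needs rechecking at `r = 0`, where it reads
`1 + 1 = 1` or `0 + -s = -s`. The Boolean facts used (`x + 0 = x`, `x + 1 = 1`, `-0 = 1`) follow
from Huntington's axiom (R3) once complements are known to be idempotent, which is (R10) at
`r = 1'`. Below, (R10) in its symmetric form `r ; -(r ; s) + -s = -s` is called `tarski`.
-/

theorem ne_of_right_neutral_of_right_absorbing {A : Type*} [Nontrivial A] {op : A → A → A}
    {a b : A} (neutral : ∀ r, op r a = r) (absorbing : ∀ r, op r b = b) : a ≠ b := by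
  rintro rfl
  obtain ⟨x, y, hxy⟩ := exists_pair_ne A
  exact hxy (((neutral x).symm.trans (absorbing x)).trans
    ((neutral y).symm.trans (absorbing y)).symm)

structure IsHuntington {A : Type*} (add : A → A → A) (compl : A → A) : Prop where
  comm : ∀ r s, add r s = add s r
  assoc : ∀ r s t, add r (add s t) = add (add r s) t
  huntington : ∀ r s, add (compl (add (compl r) s)) (compl (add (compl r) (compl s))) = r

namespace IsHuntington

variable {A : Type*} {add : A → A → A} {compl : A → A}

theorem add_compl_absorb (h : IsHuntington add compl)
    (hc : ∀ s, add (compl s) (compl s) = compl s) (x y : A) :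
    add x (compl (add (compl x) y)) = x := by
  have : Std.Commutative add := ⟨h.comm⟩
  have : Std.Associative add := ⟨fun a b c => (h.assoc a b c).symm⟩
  have hx := h.huntington x y
  set a := compl (add (compl x) y)
  set b := compl (add (compl x) (compl y))
  calc add x a = add (add a a) b := by rw [← hx]; ac_rfl
    _ = x := by rw [hc, hx]

theorem add_eq_right_trans (h : IsHuntington add compl) {a b c : A}
    (hab : add a b = b) (hbc : add b c = c) : add a c = c := by
  rw [← hbc, h.assoc, hab]

theorem add_add_compl_self (h : IsHuntington add compl)
    (hc : ∀ s, add (compl s) (compl s) = compl s) (x y : A) :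
    add x (add y (compl y)) = add y (compl y) := by
  have hy := h.add_compl_absorb hc y y
  rw [h.comm (compl y) y, h.comm] at hy
  have hnu : add (compl (add y (compl y))) (add y (compl y)) = add y (compl y) := by
    rw [h.assoc, hy]
  -- With `u = y + compl y` and `p ≤ q` meaning `p + q = q`: (R3) splits `x` as `a + b` with
  -- `a ≤ u` and `b ≤ compl u ≤ u`.
  have ha := h.add_compl_absorb hc (add y (compl y)) (compl x)
  have hb := h.add_compl_absorb hc (compl (add y (compl y))) (compl x)
  rw [h.comm (compl _) (compl x), h.comm] at ha hb
  rw [← h.huntington x (compl (add y (compl y))), ← h.assoc,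
    h.add_eq_right_trans hb hnu, ha]

theorem add_compl_self_eq (h : IsHuntington add compl)
    (hc : ∀ s, add (compl s) (compl s) = compl s) (x y : A) :
    add x (compl x) = add y (compl y) := by
  rw [← h.add_add_compl_self hc (add y (compl y)) x, h.comm, h.add_add_compl_self hc]

theorem add_compl_add_compl_self (h : IsHuntington add compl)
    (hc : ∀ s, add (compl s) (compl s) = compl s) (x y : A) :
    add x (compl (add y (compl y))) = x := by
  rw [h.add_compl_self_eq hc y x, h.comm x (compl x), h.add_compl_absorb hc]

theorem compl_compl_add_compl_self (h : IsHuntington add compl)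
    (hc : ∀ s, add (compl s) (compl s) = compl s) (y : A) :
    compl (compl (add y (compl y))) = add y (compl y) := by
  calc compl (compl (add y (compl y)))
      = add (compl (compl (add y (compl y)))) (compl (add y (compl y))) :=
        (h.add_compl_add_compl_self hc _ y).symm
    _ = add y (compl y) := by rw [h.comm, h.add_compl_self_eq hc]

end IsHuntington

namespace RelationAlgebra

variable {A : Type*} {add : A → A → A} {compl : A → A} {mul : A → A → A} {zero one : A}

theorem mul_comm_of_conv_eq_self {conv : A → A}
    (conv_mul : ∀ r s, conv (mul r s) = mul (conv s) (conv r)) (conv_eq : ∀ r, conv r = r)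
    (r s : A) : mul r s = mul s r := by
  rw [← conv_eq (mul r s), conv_mul, conv_eq, conv_eq]

theorem compl_add_compl_self_of_tarski {e : A} (e_mul : ∀ r, mul e r = r)
    (tarski : ∀ r s, add (mul r (compl (mul r s))) (compl s) = compl s) (s : A) :
    add (compl s) (compl s) = compl s := by
  simpa only [e_mul] using tarski e s

theorem mul_zero_of_tarski (add_comm : ∀ r s, add r s = add s r)
    (add_zero : ∀ r, add r zero = r) (add_one : ∀ r, add r one = one)
    (compl_one : compl one = zero)
    (mul_comm : ∀ r s, mul r s = mul s r)
    (right_distrib : ∀ r s t, mul (add r s) t = add (mul r t) (mul s t))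
    (tarski : ∀ r s, add (mul r (compl (mul r s))) (compl s) = compl s) (x : A) :
    mul x zero = zero := by
  have h1 : mul one (compl (mul one one)) = zero := by
    simpa only [compl_one, add_zero] using tarski one one
  have h2 : mul zero one = zero := by
    simpa only [add_comm zero, add_zero, mul_comm _ one, h1] using
      (right_distrib zero (compl (mul one one)) one).symm
  simpa only [add_one, mul_comm one, h2, add_zero] using (right_distrib x one zero).symm

theorem mul_one_of_ne_zero (add_zero : ∀ r, add r zero = r)
    (add_compl : ∀ r, add r (compl r) = one) (compl_one : compl one = zero)
    (tarski : ∀ r s, add (mul r (compl (mul r s))) (compl s) = compl s)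
    (integral : ∀ r s, mul r s = zero → r = zero ∨ s = zero) {x : A} (hx : x ≠ zero) :
    mul x one = one := by
  have h := tarski x one
  rw [compl_one, add_zero] at h
  have hc := (integral x _ h).resolve_left hx
  simpa only [hc, add_zero] using add_compl (mul x one)

end RelationAlgebra

def patchZeroMul {A : Type*} [DecidableEq A] (mul : A → A → A) (zero one : A) (r s : A) : A :=
  if r = zero ∧ s = zero then one else mul r s

namespace patchZeroMul

variable {A : Type*} [DecidableEq A] {mul : A → A → A} {zero one : A}

@[simp]
theorem zero_zero : patchZeroMul mul zero one zero zero = one := if_pos ⟨rfl, rfl⟩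

theorem of_left_ne {r : A} (hr : r ≠ zero) (s : A) : patchZeroMul mul zero one r s = mul r s :=
  if_neg fun h => hr h.1

theorem of_right_ne (r : A) {s : A} (hs : s ≠ zero) : patchZeroMul mul zero one r s = mul r s :=
  if_neg fun h => hs h.2

theorem comm (mul_comm : ∀ r s, mul r s = mul s r) (r s : A) :
    patchZeroMul mul zero one r s = patchZeroMul mul zero one s r := by
  simp only [patchZeroMul, and_comm, mul_comm r s]

theorem assoc (mul_assoc : ∀ r s t, mul r (mul s t) = mul (mul r s) t)
    (mul_zero : ∀ r, mul r zero = zero) (zero_mul : ∀ r, mul zero r = zero)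
    (mul_one : ∀ r, r ≠ zero → mul r one = one)
    (one_mul : ∀ r, r ≠ zero → mul one r = one)
    (integral : ∀ r s, mul r s = zero → r = zero ∨ s = zero) (one_ne_zero : one ≠ zero)
    (r s t : A) :
    patchZeroMul mul zero one r (patchZeroMul mul zero one s t)
      = patchZeroMul mul zero one (patchZeroMul mul zero one r s) t := by
  have mul_ne_zero : ∀ r s, r ≠ zero → s ≠ zero → mul r s ≠ zero := fun r s hr hs h =>
    (integral r s h).elim hr hs
  by_cases hr : r = zero <;> by_cases hs : s = zero <;> by_cases ht : t = zero <;>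
    simp [patchZeroMul, hr, hs, ht, mul_zero, zero_mul, mul_one, one_mul, one_ne_zero,
      mul_ne_zero, mul_assoc]

theorem tarski {add : A → A → A} {compl : A → A}
    (tarski : ∀ r s, add (mul r (compl (mul r s))) (compl s) = compl s)
    (zero_mul : ∀ r, mul zero r = zero) (zero_add : ∀ r, add zero r = r)
    (add_one : add one one = one) (compl_zero : compl zero = one) (compl_one : compl one = zero)
    (one_ne_zero : one ≠ zero) (r s : A) :
    add (patchZeroMul mul zero one r (compl (patchZeroMul mul zero one r s))) (compl s)
      = compl s := by
  by_cases hr : r = zero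
  · by_cases hs : s = zero
    · simp [hr, hs, compl_one, compl_zero, add_one]
    · simp [hr, of_right_ne _ hs, zero_mul, compl_zero, of_right_ne _ one_ne_zero, zero_add]
  · simp only [of_left_ne hr]
    exact tarski r s

end patchZeroMul

/-- Axiom (R8) (the right-hand distributive law) is independent of the
remaining Tarski axioms: let (A, add, compl, mul, conv, e) be any symmetric
integral relation algebra (satisfying (R1)-(R10), with converse the identity,
at least two elements, and r;s=0 implying r=0 or s=0), and modify relative
multiplication only by setting 0;0 = 1 (where 0 = -(1'+-1') and 1 = 1'+-1').
In the modified algebra, (R1)-(R7), (R9), (R10) hold but (R8) fails, since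
(0+1');0 = 0 while 0;0 + 1';0 = 1. -/
theorem R8_independent {A : Type*} [DecidableEq A] (add : A → A → A)
    (compl : A → A) (mul : A → A → A) (conv : A → A) (e : A)
    (R1 : ∀ r s, add r s = add s r)
    (R2 : ∀ r s t, add r (add s t) = add (add r s) t)
    (R3 : ∀ r s, add (compl (add (compl r) s)) (compl (add (compl r) (compl s))) = r)
    (R4 : ∀ r s t, mul r (mul s t) = mul (mul r s) t)
    (R5 : ∀ r, mul r e = r)
    (R6 : ∀ r, conv (conv r) = r)
    (R7 : ∀ r s, conv (mul r s) = mul (conv s) (conv r))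
    (R8 : ∀ r s t, mul (add r s) t = add (mul r t) (mul s t))
    (R9 : ∀ r s, conv (add r s) = add (conv r) (conv s))
    (R10 : ∀ r s, add (mul (conv r) (compl (mul r s))) (compl s) = compl s)
    (symmetric : ∀ r, conv r = r)
    (h2 : ∃ x y : A, x ≠ y)
    (integral : ∀ r s, mul r s = compl (add e (compl e)) →
      r = compl (add e (compl e)) ∨ s = compl (add e (compl e))) :
    -- 0 = -(1'+-1'), 1 = 1'+-1', and the modified relative multiplication
    let zero : A := compl (add e (compl e))
    let one : A := add e (compl e)
    let mul' : A → A → A := fun r s => if r = zero ∧ s = zero then one else mul r s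
    (∀ r s, add r s = add s r) ∧
    (∀ r s t, add r (add s t) = add (add r s) t) ∧
    (∀ r s, add (compl (add (compl r) s)) (compl (add (compl r) (compl s))) = r) ∧
    (∀ r s t, mul' r (mul' s t) = mul' (mul' r s) t) ∧
    (∀ r, mul' r e = r) ∧
    (∀ r, conv (conv r) = r) ∧
    (∀ r s, conv (mul' r s) = mul' (conv s) (conv r)) ∧
    (∀ r s, conv (add r s) = add (conv r) (conv s)) ∧
    (∀ r s, add (mul' (conv r) (compl (mul' r s))) (compl s) = compl s) ∧
    ¬ (∀ r s t, mul' (add r s) t = add (mul' r t) (mul' s t)) ∧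
    mul' (add zero e) zero = zero ∧
    add (mul' zero zero) (mul' e zero) = one := by
  intro zero one mul'
  rw [show mul' = patchZeroMul mul zero one from rfl]
  have huntington : IsHuntington add compl := ⟨R1, R2, R3⟩
  have mul_comm := RelationAlgebra.mul_comm_of_conv_eq_self R7 symmetric
  have tarski : ∀ r s, add (mul r (compl (mul r s))) (compl s) = compl s := by
    simpa only [symmetric] using R10
  have e_mul (r : A) : mul e r = r := (mul_comm e r).trans (R5 r)
  have compl_idem := RelationAlgebra.compl_add_compl_self_of_tarski e_mul tarski
  have add_zero (r : A) : add r zero = r := huntington.add_compl_add_compl_self compl_idem r e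
  have zero_add (r : A) : add zero r = r := (R1 zero r).trans (add_zero r)
  have add_one (r : A) : add r one = one := huntington.add_add_compl_self compl_idem r e
  have compl_zero : compl zero = one := huntington.compl_compl_add_compl_self compl_idem e
  have mul_zero : ∀ r, mul r zero = zero :=
    RelationAlgebra.mul_zero_of_tarski R1 add_zero add_one rfl mul_comm R8 tarski
  have zero_mul (r : A) : mul zero r = zero := (mul_comm zero r).trans (mul_zero r)
  have mul_one (r : A) (hr : r ≠ zero) : mul r one = one :=
    RelationAlgebra.mul_one_of_ne_zero add_zero
      (fun r => huntington.add_compl_self_eq compl_idem r e) rfl tarski integral hr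
  have one_mul (r : A) (hr : r ≠ zero) : mul one r = one := (mul_comm one r).trans (mul_one r hr)
  have : Nontrivial A := ⟨h2⟩
  have one_ne_zero : one ≠ zero := (ne_of_right_neutral_of_right_absorbing add_zero add_one).symm
  have e_ne_zero : e ≠ zero := ne_of_right_neutral_of_right_absorbing R5 mul_zero
  have lhs : patchZeroMul mul zero one (add zero e) zero = zero := by
    rw [zero_add, patchZeroMul.of_left_ne e_ne_zero, mul_zero]
  have rhs :
      add (patchZeroMul mul zero one zero zero) (patchZeroMul mul zero one e zero) = one := by
    rw [patchZeroMul.zero_zero, patchZeroMul.of_left_ne e_ne_zero, mul_zero, add_zero]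
  refine ⟨R1, R2, R3,
    patchZeroMul.assoc R4 mul_zero zero_mul mul_one one_mul integral one_ne_zero,
    fun r => (patchZeroMul.of_right_ne r e_ne_zero).trans (R5 r), R6,
    fun r s => by simpa only [symmetric] using patchZeroMul.comm mul_comm r s, R9,
    fun r s => by
      simpa only [symmetric] using patchZeroMul.tarski tarski zero_mul zero_add
        (add_one one) compl_zero rfl one_ne_zero r s,
    fun h => one_ne_zero ((lhs.symm.trans (h zero e zero)).trans rhs).symm, lhs, rhs⟩
end

section
/- Axiom (R10) (Tarski's law) is independent of the remaining Tarski axioms: on a Boolean algebra with at least two elements, define relative multiplication to be Boolean addition (r;s = r+s), converse to be the identity function, and 1' = 0. Then (R1)-(R9) hold but (R10) fails (take r=s=1). -/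
/-! Interpreting relative multiplication as `⊔`, converse as `id` and `1'` as `⊥` turns
(R1)–(R9) into lattice identities of a Boolean algebra, (R3) being Huntington's axiom.
Instantiating (R10) at `r = s = ⊤` collapses it to `⊤ = ⊥`, which fails as soon as the algebra
has two distinct elements. -/

theorem compl_compl_sup_sup_compl_compl_sup_compl {A : Type*} [BooleanAlgebra A] (r s : A) :
    (rᶜ ⊔ s)ᶜ ⊔ (rᶜ ⊔ sᶜ)ᶜ = r := by
  rw [compl_sup, compl_sup, compl_compl, ← inf_sup_left, sup_compl_eq_top, inf_top_eq]

theorem top_sup_compl_top_sup_top_sup_compl_top_ne_compl_top {A : Type*} [BooleanAlgebra A]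
    [Nontrivial A] : (⊤ ⊔ (⊤ ⊔ ⊤ : A)ᶜ) ⊔ (⊤ : A)ᶜ ≠ (⊤ : A)ᶜ := by
  simpa only [compl_top, sup_bot_eq, sup_idem] using top_ne_bot

/-- Axiom (R10) (Tarski's law) is independent of the remaining Tarski axioms:
on a Boolean algebra with at least two elements, with relative multiplication
defined as Boolean addition (r;s = r ⊔ s), converse the identity, and 1' = ⊥,
axioms (R1)-(R9) hold but (R10) fails (take r = s = ⊤). -/
theorem R10_independent {A : Type*} [BooleanAlgebra A]
    (h2 : ∃ x y : A, x ≠ y) :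
    (∀ r s : A, r ⊔ s = s ⊔ r) ∧
    (∀ r s t : A, r ⊔ (s ⊔ t) = (r ⊔ s) ⊔ t) ∧
    (∀ r s : A, (rᶜ ⊔ s)ᶜ ⊔ (rᶜ ⊔ sᶜ)ᶜ = r) ∧
    (∀ r s t : A, r ⊔ (s ⊔ t) = (r ⊔ s) ⊔ t) ∧
    (∀ r : A, r ⊔ (⊥ : A) = r) ∧
    (∀ r : A, id (id r) = r) ∧
    (∀ r s : A, id (r ⊔ s) = id s ⊔ id r) ∧
    (∀ r s t : A, (r ⊔ s) ⊔ t = (r ⊔ t) ⊔ (s ⊔ t)) ∧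
    (∀ r s : A, id (r ⊔ s) = id r ⊔ id s) ∧
    ¬ (∀ r s : A, (id r ⊔ (r ⊔ s)ᶜ) ⊔ sᶜ = sᶜ) ∧
    ¬ ((id (⊤ : A) ⊔ ((⊤ : A) ⊔ ⊤)ᶜ) ⊔ (⊤ : A)ᶜ = (⊤ : A)ᶜ) := by
  obtain ⟨x, y, hxy⟩ := h2
  have : Nontrivial A := nontrivial_of_ne x y hxy
  have R10_fails_at_top := top_sup_compl_top_sup_top_sup_compl_top_ne_compl_top (A := A)
  exact ⟨sup_comm, fun r s t => (sup_assoc r s t).symm,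
    compl_compl_sup_sup_compl_compl_sup_compl, fun r s t => (sup_assoc r s t).symm, sup_bot_eq,
    fun _ => rfl, sup_comm, sup_sup_distrib_right, fun _ _ => rfl,
    fun h => R10_fails_at_top (h ⊤ ⊤), R10_fails_at_top⟩
end
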